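/- arXiv:1405.0096 — 2 statements merged into one kernel-verified Lean document; each statement's English description precedes it below -/
import Mathlib

section
/- Let G = G[F,V_k,H_v] be the graph with k pockets, where |V_k| = k. Then for every complex number x such that x − 1 is not an eigenvalue of Q(H_1), the Q-characteristic polynomial of G satisfies f_{Q(G)}(x) = (f_{Q(H_1)}(x−1))^k · det(x I_n − M), where M = Q(F) + (m − 1 + Γ_{Q(H_1)}(x−1)) · diag(I_k, 0) and diag(I_k, 0) is the n×n block-diagonal matrix with respect to an ordering of V(F) listing v_1,…,v_k first. -/
open Matrix BigOperators
open scoped Classical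

/-- The adjacency matrix of a simple graph, with entries in `R`. -/
noncomputable def adjMat (R : Type*) [Zero R] [One R] {V : Type*} [Fintype V]
    (G : SimpleGraph V) : Matrix V V R :=
  Matrix.of fun x y => if G.Adj x y then (1 : R) else 0

/-- The degree of a vertex. -/
noncomputable def gdeg {V : Type*} [Fintype V] (G : SimpleGraph V) (x : V) : ℕ :=
  (Finset.univ.filter fun y => G.Adj x y).card

/-- `G` is `r`-regular. -/
def IsReg {V : Type*} [Fintype V] (G : SimpleGraph V) (r : ℕ) : Prop :=
  ∀ x, gdeg G x = r

/-- The signless Laplacian matrix `Q(G) = D(G) + A(G)`. -/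
noncomputable def qMat (R : Type*) [AddMonoidWithOne R] {V : Type*} [Fintype V]
    (G : SimpleGraph V) : Matrix V V R :=
  Matrix.diagonal (fun x => (gdeg G x : R)) + adjMat R G

/-- The adjacency spectrum, as the multiset of real roots (with multiplicity) of the
characteristic polynomial of the (real symmetric) adjacency matrix. -/
noncomputable def aSpec {V : Type*} [Fintype V] (G : SimpleGraph V) : Multiset ℝ :=
  (adjMat ℝ G).charpoly.roots

/-- The signless Laplacian spectrum. -/
noncomputable def qSpec {V : Type*} [Fintype V] (G : SimpleGraph V) : Multiset ℝ :=
  (qMat ℝ G).charpoly.roots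

/-- The `M`-coronal `Γ_M(x) = 1ᵀ (xI − M)⁻¹ 1`, the sum of the entries of `(xI − M)⁻¹`. -/
noncomputable def coronal {n R : Type*} [Fintype n] [DecidableEq n] [Field R]
    (M : Matrix n n R) (x : R) : R :=
  ∑ i, ∑ j, ((x • (1 : Matrix n n R) - M)⁻¹) i j

/-- Embeds a `P × P` matrix as a `V × V` matrix supported on the image of `g`, zero elsewhere.
If the vertices of `V` are ordered listing the image of `g` first, this is `diag(M, 0)`. -/
noncomputable def embedMatrix {P V R : Type*} [Fintype P] [AddCommMonoid R]
    (g : P → V) (M : Matrix P P R) : Matrix V V R :=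
  Matrix.of fun x y => ∑ px : P, ∑ py : P, if x = g px ∧ y = g py then M px py else 0

/-- The graph `H − v` obtained by deleting the vertex `v`. -/
def delVert {W : Type*} (H : SimpleGraph W) (v : W) : SimpleGraph {w : W // w ≠ v} :=
  H.comap Subtype.val

/-- The graph `H − {u,v}` obtained by deleting the two vertices `u, v`. -/
def delVert2 {W : Type*} (H : SimpleGraph W) (u v : W) :
    SimpleGraph {w : W // w ≠ u ∧ w ≠ v} :=
  H.comap Subtype.val

/-- The join `G₁ ∨ G₂` of two vertex-disjoint graphs: their disjoint union together with all
edges between the two parts. -/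
def sgJoin {α β : Type*} (G₁ : SimpleGraph α) (G₂ : SimpleGraph β) : SimpleGraph (α ⊕ β) where
  Adj x y :=
    match x, y with
    | Sum.inl a, Sum.inl b => G₁.Adj a b
    | Sum.inl _, Sum.inr _ => True
    | Sum.inr _, Sum.inl _ => True
    | Sum.inr a, Sum.inr b => G₂.Adj a b
  symm := by
    constructor
    rintro (a | a) (b | b) h
    · exact G₁.adj_symm h
    · trivial
    · trivial
    · exact G₂.adj_symm h
  loopless := by
    constructor
    rintro (a | a) h
    · exact G₁.loopless.irrefl a h
    · exact G₂.loopless.irrefl a h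

/-- The graph `G[F, V_k, H_v]` with `k` pockets: take one copy of `F` and `k` disjoint copies
of `H` (with specified vertex `v`), identifying the vertex `v` of the `i`-th copy with the
vertex `f i` of `F`.  The `i`-th copy of `H − v` is carried by `{i} × {w // w ≠ v}`. -/
def pocketGraph {V W : Type*} (F : SimpleGraph V) (H : SimpleGraph W) (v : W)
    {k : ℕ} (f : Fin k ↪ V) : SimpleGraph (V ⊕ (Fin k × {w : W // w ≠ v})) where
  Adj x y :=
    match x, y with
    | Sum.inl a, Sum.inl b => F.Adj a b
    | Sum.inl a, Sum.inr (i, w) => a = f i ∧ H.Adj v w.1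
    | Sum.inr (i, w), Sum.inl a => a = f i ∧ H.Adj v w.1
    | Sum.inr (i, w), Sum.inr (j, w') => i = j ∧ H.Adj w.1 w'.1
  symm := by
    constructor
    rintro (a | ⟨i, w⟩) (b | ⟨j, w'⟩) h
    · exact F.adj_symm h
    · exact h
    · exact h
    · exact ⟨h.1.symm, H.adj_symm h.2⟩
  loopless := by
    constructor
    rintro (a | ⟨i, w⟩) h
    · exact F.loopless.irrefl a h
    · exact H.loopless.irrefl _ h.2

/-- The graph `G[F, E_k, H_{uv}]` with `k` edge-pockets: take one copy of `F` and `k` disjoint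
copies of `H` (with specified edge `uv`), pasting the edge `uv` of the `i`-th copy onto the
edge `e_i = (a i)(b i)` of `F` (identifying `u` with `a i` and `v` with `b i`).  The `i`-th
copy of `H − {u,v}` is carried by `{i} × {w // w ≠ u ∧ w ≠ v}`. -/
def edgePocketGraph {V W : Type*} (F : SimpleGraph V) (H : SimpleGraph W) (u v : W)
    {k : ℕ} (a b : Fin k → V) :
    SimpleGraph (V ⊕ (Fin k × {w : W // w ≠ u ∧ w ≠ v})) where
  Adj x y :=
    match x, y with
    | Sum.inl s, Sum.inl t => F.Adj s t
    | Sum.inl s, Sum.inr (i, w) => (s = a i ∧ H.Adj u w.1) ∨ (s = b i ∧ H.Adj v w.1)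
    | Sum.inr (i, w), Sum.inl s => (s = a i ∧ H.Adj u w.1) ∨ (s = b i ∧ H.Adj v w.1)
    | Sum.inr (i, w), Sum.inr (j, w') => i = j ∧ H.Adj w.1 w'.1
  symm := by
    constructor
    rintro (s | ⟨i, w⟩) (t | ⟨j, w'⟩) h
    · exact F.adj_symm h
    · exact h
    · exact h
    · exact ⟨h.1.symm, H.adj_symm h.2⟩
  loopless := by
    constructor
    rintro (s | ⟨i, w⟩) h
    · exact F.loopless.irrefl s h
    · exact H.loopless.irrefl _ h.2


/-!
List the vertices of `G` as `V(F)` followed by the `k` copies of `H₁ = H − v`. Since `v` is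
adjacent to every other vertex of `H`, `xI − Q(G)` is the block matrix with corner
`xI − Q(F) − (m − 1)·diag(I_k, 0)`, off-diagonal blocks `−P` and `−Pᵀ` for the incidence matrix
`P` joining `f i` to the `i`-th copy, and lower block `I_k ⊗ N` with `N = (x − 1)I − Q(H₁)`.
The Schur complement of that block contributes `P (I_k ⊗ N⁻¹) Pᵀ = (1ᵀ N⁻¹ 1)·diag(I_k, 0)`,
which is where the coronal comes from, while `det (I_k ⊗ N) = (det N)ᵏ`.
-/

open scoped Kronecker

section PocketIncidence

variable {ι V : Type*} [Fintype ι]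

theorem embedMatrix_one_apply {R : Type*} [AddCommMonoidWithOne R] [DecidableEq ι] (g : ι → V)
    (a b : V) :
    embedMatrix g (1 : Matrix ι ι R) a b = ∑ i, if a = g i ∧ b = g i then 1 else 0 := by
  simp only [embedMatrix, of_apply, one_apply]
  refine Finset.sum_congr rfl fun i _ => ?_
  rw [Finset.sum_eq_single i] <;> aesop

variable [DecidableEq V]

theorem embedMatrix_one_eq_diagonal {R : Type*} [AddCommMonoidWithOne R] [DecidableEq ι]
    (g : ι → V) :
    embedMatrix g (1 : Matrix ι ι R)
      = diagonal fun a => ((Finset.univ.filter fun i => a = g i).card : R) := by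
  ext a b
  rw [embedMatrix_one_apply, diagonal_apply]
  split_ifs with hab
  · simp [hab, Finset.sum_boole]
  · exact Finset.sum_eq_zero fun i _ => if_neg fun hi => hab (hi.1.trans hi.2.symm)

def pocketIncidence (R : Type*) [Zero R] [One R] (g : ι → V) (S : Type*) : Matrix V (ι × S) R :=
  Matrix.of fun a p => if a = g p.1 then 1 else 0

theorem pocketIncidence_mul_kronecker_mul_transpose {R : Type*} [CommSemiring R] [DecidableEq ι]
    {S : Type*} [Fintype S] (g : ι → V) (K : Matrix S S R) :
    pocketIncidence R g S * ((1 : Matrix ι ι R) ⊗ₖ K) * (pocketIncidence R g S)ᵀ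
      = (∑ w, ∑ u, K w u) • embedMatrix g (1 : Matrix ι ι R) := by
  ext a b
  simp only [pocketIncidence, mul_apply, of_apply, kroneckerMap_apply, one_apply, ite_mul,
    one_mul, zero_mul, mul_ite, mul_zero, Fintype.sum_prod_type, Finset.sum_ite_irrel,
    Finset.sum_const_zero, Finset.sum_ite_eq', Finset.mem_univ, if_true, transpose_apply,
    mul_one, Matrix.smul_apply, embedMatrix_one_apply, ite_and, smul_eq_mul, Finset.mul_sum]
  refine Finset.sum_congr rfl fun i _ => ?_
  rw [Finset.sum_comm]
  split_ifs <;> rfl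

end PocketIncidence

theorem qMat_apply {R : Type*} [AddMonoidWithOne R] {V : Type*} [Fintype V] [DecidableEq V]
    (G : SimpleGraph V) (x y : V) :
    qMat R G x y = (if x = y then (gdeg G x : R) else 0) + if G.Adj x y then 1 else 0 := by
  simp only [qMat, adjMat, Matrix.add_apply, diagonal_apply, of_apply]
  congr

@[simp]
theorem delVert_adj {W : Type*} (H : SimpleGraph W) (v : W) (w u : {w // w ≠ v}) :
    (delVert H v).Adj w u ↔ H.Adj w u :=
  Iff.rfl

section PocketGraph

variable {V W : Type*} (F : SimpleGraph V) (H : SimpleGraph W) (v : W) {k : ℕ} (f : Fin k ↪ V)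

@[simp]
theorem pocketGraph_adj_inl_inl (a b : V) :
    (pocketGraph F H v f).Adj (.inl a) (.inl b) ↔ F.Adj a b :=
  Iff.rfl

@[simp]
theorem pocketGraph_adj_inl_inr (a : V) (i : Fin k) (w : {w // w ≠ v}) :
    (pocketGraph F H v f).Adj (.inl a) (.inr (i, w)) ↔ a = f i ∧ H.Adj v w :=
  Iff.rfl

@[simp]
theorem pocketGraph_adj_inr_inl (i : Fin k) (w : {w // w ≠ v}) (a : V) :
    (pocketGraph F H v f).Adj (.inr (i, w)) (.inl a) ↔ a = f i ∧ H.Adj v w :=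
  Iff.rfl

@[simp]
theorem pocketGraph_adj_inr_inr (i j : Fin k) (w u : {w // w ≠ v}) :
    (pocketGraph F H v f).Adj (.inr (i, w)) (.inr (j, u)) ↔ i = j ∧ H.Adj w u :=
  Iff.rfl

variable [Fintype V] [Fintype W] [DecidableEq W]

theorem gdeg_pocketGraph_inr (i : Fin k) (w : {w // w ≠ v}) (hw : H.Adj v w) :
    gdeg (pocketGraph F H v f) (.inr (i, w)) = gdeg (delVert H v) w + 1 := by
  simp only [gdeg, Finset.card_filter, Fintype.sum_sum_type, Fintype.sum_prod_type]
  rw [Fintype.sum_eq_single i fun j hj =>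
    Finset.sum_eq_zero fun y _ => if_neg fun h => hj h.1.symm]
  simp [hw, add_comm]

variable [DecidableEq V]

theorem gdeg_pocketGraph_inl (hv : ∀ w, w ≠ v → H.Adj v w) (a : V) :
    gdeg (pocketGraph F H v f) (.inl a)
      = gdeg F a + Fintype.card {w // w ≠ v} * (Finset.univ.filter fun i => a = f i).card := by
  have hS : ∀ w : {w // w ≠ v}, H.Adj v w := fun w => hv w w.2
  simp only [gdeg, Finset.card_filter, Fintype.sum_sum_type, Fintype.sum_prod_type, Finset.mul_sum]
  simp [hS]

theorem qMat_pocketGraph {R : Type*} [Semiring R] (hv : ∀ w, w ≠ v → H.Adj v w) :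
    qMat R (pocketGraph F H v f)
      = fromBlocks
          (qMat R F + (Fintype.card {w // w ≠ v} : R) • embedMatrix (f : Fin k → V) 1)
          (pocketIncidence R f {w // w ≠ v}) (pocketIncidence R f {w // w ≠ v})ᵀ
          ((1 : Matrix (Fin k) (Fin k) R) ⊗ₖ (qMat R (delVert H v) + 1)) := by
  ext (a | ⟨i, w⟩) (b | ⟨j, u⟩)
  · rcases eq_or_ne a b with rfl | hab
    · simp [qMat_apply, gdeg_pocketGraph_inl F H v f hv, embedMatrix_one_eq_diagonal]
    · simp [qMat_apply, hab, embedMatrix_one_eq_diagonal]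
  · simp [qMat_apply, pocketIncidence, hv _ u.2]
  · simp [qMat_apply, pocketIncidence, hv _ w.2]
  · rcases eq_or_ne i j with rfl | hij
    · rcases eq_or_ne w u with rfl | hwu
      · simp [qMat_apply, gdeg_pocketGraph_inr F H v f i w (hv _ w.2)]
      · simp [qMat_apply, hwu]
    · simp [qMat_apply, hij]

end PocketGraph

section SchurComplement

variable {V ι S R : Type*} [DecidableEq V] [DecidableEq ι] [DecidableEq S] [CommRing R]

theorem smul_one_sub_fromBlocks_one_kronecker (c : R) (A : Matrix V V R)
    (B : Matrix V (ι × S) R) (C : Matrix (ι × S) V R) (D : Matrix S S R) :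
    c • (1 : Matrix (V ⊕ ι × S) (V ⊕ ι × S) R) - fromBlocks A B C ((1 : Matrix ι ι R) ⊗ₖ D)
      = fromBlocks (c • 1 - A) (-B) (-C) ((1 : Matrix ι ι R) ⊗ₖ (c • 1 - D)) := by
  ext (a | ⟨i, w⟩) (b | ⟨j, u⟩) <;> simp [one_apply, mul_sub, ite_and]
  split_ifs <;> rfl

variable [Fintype V] [Fintype ι] [Fintype S]

theorem det_fromBlocks_pocketIncidence (g : ι → V) (M : Matrix V V R) (N : Matrix S S R)
    (hN : IsUnit N.det) :
    (fromBlocks M (-pocketIncidence R g S) (-(pocketIncidence R g S)ᵀ)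
        ((1 : Matrix ι ι R) ⊗ₖ N)).det
      = N.det ^ Fintype.card ι * (M - (∑ w, ∑ u, N⁻¹ w u) • embedMatrix g 1).det := by
  have hD : IsUnit ((1 : Matrix ι ι R) ⊗ₖ N).det := by
    rw [det_kronecker, det_one, one_pow, one_mul]
    exact hN.pow _
  have := invertibleOfIsUnitDet _ hD
  rw [det_fromBlocks₂₂, invOf_eq_nonsing_inv, inv_kronecker, inv_one, Matrix.neg_mul,
    Matrix.neg_mul, Matrix.mul_neg, neg_neg, pocketIncidence_mul_kronecker_mul_transpose,
    det_kronecker, det_one, one_pow, one_mul]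

end SchurComplement

theorem signlessLap_charpoly_pocketGraph_general
    {V W : Type*} [Fintype V] [DecidableEq V] [Fintype W] [DecidableEq W]
    (m k : ℕ) (hm : Fintype.card W = m)
    (F : SimpleGraph V) (H : SimpleGraph W) (v : W)
    (hdeg : ∀ w : W, w ≠ v → H.Adj v w)
    (f : Fin k ↪ V)
    (x : ℂ)
    (hx : ((x - 1) • (1 : Matrix {w : W // w ≠ v} {w : W // w ≠ v} ℂ)
            - qMat ℂ (delVert H v)).det ≠ 0) :
    (x • (1 : Matrix (V ⊕ (Fin k × {w : W // w ≠ v})) (V ⊕ (Fin k × {w : W // w ≠ v})) ℂ)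
        - qMat ℂ (pocketGraph F H v f)).det
      = (((x - 1) • (1 : Matrix {w : W // w ≠ v} {w : W // w ≠ v} ℂ)
            - qMat ℂ (delVert H v)).det) ^ k
        * (x • (1 : Matrix V V ℂ)
            - (qMat ℂ F
                + (((m : ℂ) - 1) + coronal (qMat ℂ (delVert H v)) (x - 1))
                    • embedMatrix (f : Fin k → V) (1 : Matrix (Fin k) (Fin k) ℂ))).det := by
  have hcard : (Fintype.card {w : W // w ≠ v} : ℂ) = m - 1 := by
    have hm1 : 1 ≤ m := hm ▸ Fintype.card_pos_iff.2 ⟨v⟩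
    simp [hm, Nat.cast_sub hm1]
  have hpocket : x • (1 : Matrix {w : W // w ≠ v} {w : W // w ≠ v} ℂ)
      - (qMat ℂ (delVert H v) + 1) = (x - 1) • 1 - qMat ℂ (delVert H v) := by
    rw [sub_smul, one_smul]; abel
  rw [qMat_pocketGraph F H v f hdeg, smul_one_sub_fromBlocks_one_kronecker, hpocket,
    det_fromBlocks_pocketIncidence _ _ _ (isUnit_iff_ne_zero.mpr hx), Fintype.card_fin, hcard,
    coronal, add_smul, sub_sub, add_assoc]

/-- Proposition 3.5. -/
theorem signlessLap_charpoly_pocketGraph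
    {V W : Type*} [Fintype V] [DecidableEq V] [Fintype W] [DecidableEq W]
    (n m k : ℕ) (hn : Fintype.card V = n) (hm : Fintype.card W = m) (hm2 : 2 ≤ m)
    (F : SimpleGraph V) (H : SimpleGraph W) (v : W)
    (hdeg : ∀ w : W, w ≠ v → H.Adj v w)
    (f : Fin k ↪ V)
    (x : ℂ)
    (hx : ((x - 1) • (1 : Matrix {w : W // w ≠ v} {w : W // w ≠ v} ℂ)
            - qMat ℂ (delVert H v)).det ≠ 0) :
    (x • (1 : Matrix (V ⊕ (Fin k × {w : W // w ≠ v})) (V ⊕ (Fin k × {w : W // w ≠ v})) ℂ)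
        - qMat ℂ (pocketGraph F H v f)).det
      = (((x - 1) • (1 : Matrix {w : W // w ≠ v} {w : W // w ≠ v} ℂ)
            - qMat ℂ (delVert H v)).det) ^ k
        * (x • (1 : Matrix V V ℂ)
            - (qMat ℂ F
                + (((m : ℂ) - 1) + coronal (qMat ℂ (delVert H v)) (x - 1))
                    • embedMatrix (f : Fin k → V) (1 : Matrix (Fin k) (Fin k) ℂ))).det :=
  signlessLap_charpoly_pocketGraph_general m k hm F H v hdeg f x hx
end

section
/- Let 𝓔_k be an r-regular spanning subgraph of F (so p = n), and let G = G[F,E_k,H_{uv}] with |E_k| = k. Then for every complex number x such that x − 2 is not an eigenvalue of Q(H_2), f_{Q(G)}(x) = (f_{Q(H_2)}(x−2))^k · det(x I_n − M), where M = r·((m−2) + Γ_{Q(H_2)}(x−2))·I_n + Q(F) + Γ_{Q(H_2)}(x−2)·A(𝓔_k). -/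
open Matrix BigOperators
open scoped Classical

/-!
Order the vertices of `G = G[F, E_k, H_{uv}]` with those of `F` first. Since `u` and `v` are
adjacent to every vertex of `H`, each vertex of the `i`-th copy of `H₂` is adjacent to both ends
of `e_i`, so `xI − Q(G)` is the block matrix `[[A, −B], [−Bᵀ, I_k ⊗ Y]]` with
`Y = (x − 2)I − Q(H₂)`, `B = N ⊗ 1ᵀ` for the vertex–edge incidence matrix `N` of `𝓔_k`, and
`A = xI − Q(F) − (m − 2)·D(𝓔_k)`. Taking the Schur complement of `I_k ⊗ Y` gives
`det(Y)^k · det(A − B (I_k ⊗ Y⁻¹) Bᵀ)`, and `B (I_k ⊗ Y⁻¹) Bᵀ = Γ · N Nᵀ = Γ · Q(𝓔_k)`,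
which is `Γ · (rI + A(𝓔_k))` because `𝓔_k` is `r`-regular.
-/

open scoped Kronecker

section GraphMatrices

variable {V : Type*} [Fintype V]

theorem gdeg_eq_sum_adjMat (R : Type*) [NonAssocSemiring R] (G : SimpleGraph V) (s : V) :
    (gdeg G s : R) = ∑ t, adjMat R G s t := by
  simp [gdeg, adjMat, Finset.sum_boole]

theorem gdeg_eq_degree (G : SimpleGraph V) [DecidableRel G.Adj] (s : V) :
    gdeg G s = G.degree s := by
  rw [← SimpleGraph.card_neighborFinset_eq_degree, SimpleGraph.neighborFinset_eq_filter, gdeg]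
  congr

theorem sum_comp_eq_sum_of_range_eq_edgeSet {ι R : Type*} [Fintype ι] [AddCommMonoid R]
    (G : SimpleGraph V) {e : ι → Sym2 V} (he : Function.Injective e)
    (hr : Set.range e = G.edgeSet) (f : Sym2 V → R) (hf : ∀ z ∉ G.edgeSet, f z = 0) :
    ∑ i, f (e i) = ∑ z, f z :=
  Fintype.sum_of_injective e he _ f (fun z hz => hf z (hr ▸ hz)) fun _ => rfl

variable [DecidableEq V] (R : Type*) [Semiring R]

theorem incMatrix_mul_transpose_eq_qMat (G : SimpleGraph V) [DecidableRel G.Adj] :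
    G.incMatrix R * (G.incMatrix R)ᵀ = qMat R G := by
  ext s t
  rw [SimpleGraph.incMatrix_mul_transpose, qMat]
  by_cases hst : s = t
  · subst hst
    simp [adjMat, gdeg_eq_degree]
  · simp [hst, adjMat]

variable {G : SimpleGraph V} {r : ℕ}

theorem diagonal_gdeg_eq_smul_one_of_isReg (hG : IsReg G r) :
    diagonal (fun s => (gdeg G s : R)) = (r : R) • 1 := by
  simp [hG _, smul_one_eq_diagonal]

theorem qMat_eq_smul_one_add_adjMat_of_isReg (hG : IsReg G r) :
    qMat R G = (r : R) • 1 + adjMat R G := by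
  ext s t
  by_cases hst : s = t
  · subst hst
    simp [qMat, hG s]
  · simp [qMat, hst]

end GraphMatrices

section IncidenceOfEdges

variable {V ι : Type*} [DecidableEq V]

def incMatrixOfEdges (R : Type*) [Zero R] [One R] (e : ι → Sym2 V) : Matrix V ι R :=
  Matrix.of fun s i => if s ∈ e i then 1 else 0

variable {R : Type*} [Semiring R] (G : SimpleGraph V) [DecidableRel G.Adj] {e : ι → Sym2 V}

theorem incMatrixOfEdges_eq_submatrix (he : ∀ i, e i ∈ G.edgeSet) :
    incMatrixOfEdges R e = (G.incMatrix R).submatrix id e := by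
  ext s i
  simp [incMatrixOfEdges, SimpleGraph.incMatrix_apply', SimpleGraph.incidenceSet, he i]

variable [Fintype V] [Fintype ι]

theorem incMatrixOfEdges_mul_transpose (he : Function.Injective e)
    (hr : Set.range e = G.edgeSet) :
    incMatrixOfEdges R e * (incMatrixOfEdges R e)ᵀ = qMat R G := by
  rw [← incMatrix_mul_transpose_eq_qMat,
    incMatrixOfEdges_eq_submatrix G fun i => hr ▸ Set.mem_range_self i]
  ext s t
  simp only [mul_apply, submatrix_apply, transpose_apply, id]
  exact sum_comp_eq_sum_of_range_eq_edgeSet G he hr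
    (fun z => G.incMatrix R s z * G.incMatrix R t z)
    fun z hz => by rw [G.incMatrix_of_notMem_incidenceSet fun h => hz h.1, zero_mul]

theorem incMatrixOfEdges_mulVec_one (he : Function.Injective e)
    (hr : Set.range e = G.edgeSet) :
    incMatrixOfEdges R e *ᵥ 1 = fun s => (gdeg G s : R) := by
  ext s
  rw [incMatrixOfEdges_eq_submatrix G fun i => hr ▸ Set.mem_range_self i, gdeg_eq_degree,
    ← G.sum_incMatrix_apply]
  simp only [mulVec, dotProduct, submatrix_apply, id, Pi.one_apply, mul_one]
  exact sum_comp_eq_sum_of_range_eq_edgeSet G he hr (G.incMatrix R s)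
    fun z hz => G.incMatrix_of_notMem_incidenceSet fun h => hz h.1

end IncidenceOfEdges

section SchurComplement

variable {ι κ σ K : Type*} [Fintype κ] [Fintype σ] [DecidableEq κ] [Field K]

-- `N.submatrix id Prod.fst` is the matrix `B = N ⊗ 1ᵀ` of the block decomposition.
theorem submatrix_fst_mul_one_kronecker_mul_transpose (N : Matrix ι κ K) (Z : Matrix σ σ K) :
    N.submatrix id (Prod.fst : κ × σ → κ) * ((1 : Matrix κ κ K) ⊗ₖ Z)
        * (N.submatrix id (Prod.fst : κ × σ → κ))ᵀ
      = (∑ w, ∑ w', Z w w') • (N * Nᵀ) := by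
  ext s t
  simp only [mul_apply, transpose_apply, submatrix_apply, id, kroneckerMap_apply,
    Fintype.sum_prod_type, one_apply, Matrix.smul_apply, smul_eq_mul, Finset.sum_mul,
    Finset.mul_sum]
  refine Finset.sum_congr rfl fun i _ => ?_
  rw [Finset.sum_comm]
  simp only [mul_ite, ite_mul, zero_mul, mul_zero, one_mul, Finset.sum_ite_irrel,
    Finset.sum_const_zero, Finset.sum_ite_eq', Finset.mem_univ, if_true]
  rw [Finset.sum_comm]
  exact Finset.sum_congr rfl fun _ _ => Finset.sum_congr rfl fun _ _ => by ring

variable [Fintype ι] [DecidableEq ι] [DecidableEq σ]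

theorem det_fromBlocks_one_kronecker (A : Matrix ι ι K) (N : Matrix ι κ K) (Y : Matrix σ σ K)
    (hY : Y.det ≠ 0) :
    (fromBlocks A (-N.submatrix id (Prod.fst : κ × σ → κ)) (-(N.submatrix id Prod.fst)ᵀ)
        ((1 : Matrix κ κ K) ⊗ₖ Y)).det
      = Y.det ^ Fintype.card κ * (A - (∑ w, ∑ w', Y⁻¹ w w') • (N * Nᵀ)).det := by
  have hD : IsUnit ((1 : Matrix κ κ K) ⊗ₖ Y).det := by
    rw [det_kronecker, det_one, one_pow, one_mul]
    exact (isUnit_iff_ne_zero.mpr hY).pow _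
  let := invertibleOfIsUnitDet _ hD
  rw [det_fromBlocks₂₂, invOf_eq_nonsing_inv, inv_kronecker, inv_one]
  simp only [Matrix.mul_neg, Matrix.neg_mul, neg_neg]
  rw [submatrix_fst_mul_one_kronecker_mul_transpose, det_kronecker, det_one, one_pow, one_mul]

end SchurComplement

section EdgePocketGraph

variable {V W : Type*} (F : SimpleGraph V) (H : SimpleGraph W) {u v : W} {k : ℕ}
  (a b : Fin k → V)

theorem edgePocketGraph_adj_inl_inr (hdegu : ∀ w, w ≠ u → H.Adj u w)
    (hdegv : ∀ w, w ≠ v → H.Adj v w) (s : V) (i : Fin k) (w : {w : W // w ≠ u ∧ w ≠ v}) :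
    (edgePocketGraph F H u v a b).Adj (Sum.inl s) (Sum.inr (i, w)) ↔ s ∈ s(a i, b i) := by
  rw [Sym2.mem_iff]
  exact ⟨Or.imp And.left And.left,
    Or.imp (fun h => ⟨h, hdegu w w.2.1⟩) (fun h => ⟨h, hdegv w w.2.2⟩)⟩

theorem card_subtype_ne_and_ne_add_two [Fintype W] [DecidableEq W] (huv : u ≠ v) :
    Fintype.card {w : W // w ≠ u ∧ w ≠ v} + 2 = Fintype.card W := by
  have hcompl : (Finset.univ.filter fun w : W => w ≠ u ∧ w ≠ v) = ({u, v} : Finset W)ᶜ := by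
    ext w; simp
  rw [Fintype.card_subtype, hcompl, ← Finset.card_pair huv, Finset.card_compl_add_card]

variable [Fintype V] [DecidableEq V] [Fintype W] [DecidableEq W] (R : Type*)

theorem adjMat_edgePocketGraph [NonAssocSemiring R] (hdegu : ∀ w, w ≠ u → H.Adj u w)
    (hdegv : ∀ w, w ≠ v → H.Adj v w) :
    adjMat R (edgePocketGraph F H u v a b)
      = fromBlocks (adjMat R F)
          ((incMatrixOfEdges R fun i => s(a i, b i)).submatrix id Prod.fst)
          ((incMatrixOfEdges R fun i => s(a i, b i)).submatrix id Prod.fst)ᵀ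
          ((1 : Matrix (Fin k) (Fin k) R) ⊗ₖ adjMat R (delVert2 H u v)) := by
  ext (s | ⟨i, w⟩) (t | ⟨j, w'⟩)
  · rfl
  · simp only [adjMat, of_apply, fromBlocks_apply₁₂, submatrix_apply, id, incMatrixOfEdges,
      edgePocketGraph_adj_inl_inr F H a b hdegu hdegv]
  · simp only [adjMat, of_apply, fromBlocks_apply₂₁, transpose_apply, submatrix_apply, id,
      incMatrixOfEdges, (edgePocketGraph F H u v a b).adj_comm (Sum.inr _),
      edgePocketGraph_adj_inl_inr F H a b hdegu hdegv]
  · by_cases hij : i = j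
    · subst hij
      simp [adjMat, delVert2, edgePocketGraph]
    · simp [adjMat, edgePocketGraph, hij]

theorem gdeg_edgePocketGraph_inl [NonAssocSemiring R] (hdegu : ∀ w, w ≠ u → H.Adj u w)
    (hdegv : ∀ w, w ≠ v → H.Adj v w) (s : V) :
    (gdeg (edgePocketGraph F H u v a b) (Sum.inl s) : R)
      = gdeg F s + Fintype.card {w : W // w ≠ u ∧ w ≠ v}
          * (incMatrixOfEdges R (fun i => s(a i, b i)) *ᵥ 1) s := by
  rw [gdeg_eq_sum_adjMat, adjMat_edgePocketGraph F H a b R hdegu hdegv, Fintype.sum_sum_type,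
    gdeg_eq_sum_adjMat, Fintype.sum_prod_type]
  simp [mulVec, dotProduct, Finset.mul_sum]

theorem gdeg_edgePocketGraph_inr [NonAssocSemiring R] (hdegu : ∀ w, w ≠ u → H.Adj u w)
    (hdegv : ∀ w, w ≠ v → H.Adj v w) (hab : ∀ i, a i ≠ b i) (i : Fin k)
    (w : {w : W // w ≠ u ∧ w ≠ v}) :
    (gdeg (edgePocketGraph F H u v a b) (Sum.inr (i, w)) : R)
      = 2 + gdeg (delVert2 H u v) w := by
  rw [gdeg_eq_sum_adjMat, adjMat_edgePocketGraph F H a b R hdegu hdegv, Fintype.sum_sum_type,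
    gdeg_eq_sum_adjMat, Fintype.sum_prod_type]
  have hpair : ({t | t = a i ∨ t = b i} : Finset V) = {a i, b i} := by ext; simp
  simp [incMatrixOfEdges, hpair, Finset.card_pair (hab i), one_apply]

theorem smul_one_sub_qMat_edgePocketGraph [Ring R] (hdegu : ∀ w, w ≠ u → H.Adj u w)
    (hdegv : ∀ w, w ≠ v → H.Adj v w) (hab : ∀ i, a i ≠ b i) (x : R) :
    x • (1 : Matrix (V ⊕ (Fin k × {w : W // w ≠ u ∧ w ≠ v}))
        (V ⊕ (Fin k × {w : W // w ≠ u ∧ w ≠ v})) R) - qMat R (edgePocketGraph F H u v a b)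
      = fromBlocks
          (x • 1 - qMat R F - (Fintype.card {w : W // w ≠ u ∧ w ≠ v} : R)
              • diagonal (incMatrixOfEdges R (fun i => s(a i, b i)) *ᵥ 1))
          (-(incMatrixOfEdges R fun i => s(a i, b i)).submatrix id Prod.fst)
          (-((incMatrixOfEdges R fun i => s(a i, b i)).submatrix id Prod.fst)ᵀ)
          ((1 : Matrix (Fin k) (Fin k) R) ⊗ₖ ((x - 2) • 1 - qMat R (delVert2 H u v))) := by
  have hadj := adjMat_edgePocketGraph F H a b R hdegu hdegv
  ext (s | ⟨i, w⟩) (t | ⟨j, w'⟩)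
  · have := congr_fun₂ hadj (Sum.inl s) (Sum.inl t)
    by_cases hst : s = t
    · subst hst
      simp_all [qMat, one_apply, gdeg_edgePocketGraph_inl F H a b R hdegu hdegv]
      abel
    · simp_all [qMat, one_apply]
  · simpa [qMat] using congr_fun₂ hadj (Sum.inl s) (Sum.inr (j, w'))
  · simpa [qMat] using congr_fun₂ hadj (Sum.inr (i, w)) (Sum.inl t)
  · have := congr_fun₂ hadj (Sum.inr (i, w)) (Sum.inr (j, w'))
    by_cases hij : i = j
    · subst hij
      by_cases hww : w = w'
      · subst hww
        simp_all [qMat, one_apply, gdeg_edgePocketGraph_inr F H a b R hdegu hdegv hab]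
        abel
      · simp_all [qMat, one_apply]
    · simp_all [qMat, one_apply]

end EdgePocketGraph

theorem signlessLap_charpoly_edgePocketGraph_spanning_general
    {V W : Type*} [Fintype V] [DecidableEq V] [Fintype W] [DecidableEq W]
    (m k r : ℕ)
    (hm : Fintype.card W = m)
    (F : SimpleGraph V) (H : SimpleGraph W) (u v : W) (huv : u ≠ v)
    (hdegu : ∀ w : W, w ≠ u → H.Adj u w) (hdegv : ∀ w : W, w ≠ v → H.Adj v w)
    (a b : Fin k → V)
    (hinj : Function.Injective fun i => s(a i, b i))
    (E : SimpleGraph V)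
    (hE : ∀ s t : V, E.Adj s t ↔ ∃ i, s(s, t) = s(a i, b i))
    (hreg : IsReg E r)
    (x : ℂ)
    (hx : ((x - 2) • (1 : Matrix {w : W // w ≠ u ∧ w ≠ v} {w : W // w ≠ u ∧ w ≠ v} ℂ)
            - qMat ℂ (delVert2 H u v)).det ≠ 0) :
    (x • (1 : Matrix (V ⊕ (Fin k × {w : W // w ≠ u ∧ w ≠ v}))
            (V ⊕ (Fin k × {w : W // w ≠ u ∧ w ≠ v})) ℂ)
        - qMat ℂ (edgePocketGraph F H u v a b)).det
      = (((x - 2) • (1 : Matrix {w : W // w ≠ u ∧ w ≠ v} {w : W // w ≠ u ∧ w ≠ v} ℂ)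
            - qMat ℂ (delVert2 H u v)).det) ^ k
        * (x • (1 : Matrix V V ℂ)
            - (((r : ℂ) * (((m : ℂ) - 2) + coronal (qMat ℂ (delVert2 H u v)) (x - 2)))
                  • (1 : Matrix V V ℂ)
                + qMat ℂ F
                + coronal (qMat ℂ (delVert2 H u v)) (x - 2) • adjMat ℂ E)).det := by
  have hrange : Set.range (fun i => s(a i, b i)) = E.edgeSet := by
    ext z
    induction z using Sym2.ind with
    | _ s t => simp [hE, eq_comm]
  have hab : ∀ i, a i ≠ b i := fun i => E.ne_of_adj ((hE _ _).2 ⟨i, rfl⟩)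
  have hcard : (Fintype.card {w : W // w ≠ u ∧ w ≠ v} : ℂ) = m - 2 := by
    rw [← hm, ← card_subtype_ne_and_ne_add_two huv]
    push_cast
    ring
  rw [smul_one_sub_qMat_edgePocketGraph F H a b ℂ hdegu hdegv hab,
    det_fromBlocks_one_kronecker _ _ _ hx, incMatrixOfEdges_mul_transpose E hinj hrange,
    incMatrixOfEdges_mulVec_one E hinj hrange, Fintype.card_fin,
    diagonal_gdeg_eq_smul_one_of_isReg ℂ hreg, qMat_eq_smul_one_add_adjMat_of_isReg ℂ hreg, hcard]
  unfold coronal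
  congr 2
  module

/-- Proposition 4.4 of the paper, spanning case. -/
theorem signlessLap_charpoly_edgePocketGraph_spanning
    {V W : Type*} [Fintype V] [DecidableEq V] [Fintype W] [DecidableEq W]
    (n m k r : ℕ) (hn : Fintype.card V = n) (hn2 : 2 ≤ n)
    (hm : Fintype.card W = m) (hm3 : 3 ≤ m)
    (F : SimpleGraph V) (H : SimpleGraph W) (u v : W) (huv : u ≠ v)
    (hdegu : ∀ w : W, w ≠ u → H.Adj u w) (hdegv : ∀ w : W, w ≠ v → H.Adj v w)
    (a b : Fin k → V) (hab : ∀ i, F.Adj (a i) (b i))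
    (hinj : Function.Injective fun i => s(a i, b i))
    (E : SimpleGraph V)
    (hE : ∀ s t : V, E.Adj s t ↔ ∃ i, s(s, t) = s(a i, b i))
    (hreg : IsReg E r)
    (x : ℂ)
    (hx : ((x - 2) • (1 : Matrix {w : W // w ≠ u ∧ w ≠ v} {w : W // w ≠ u ∧ w ≠ v} ℂ)
            - qMat ℂ (delVert2 H u v)).det ≠ 0) :
    (x • (1 : Matrix (V ⊕ (Fin k × {w : W // w ≠ u ∧ w ≠ v}))
            (V ⊕ (Fin k × {w : W // w ≠ u ∧ w ≠ v})) ℂ)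
        - qMat ℂ (edgePocketGraph F H u v a b)).det
      = (((x - 2) • (1 : Matrix {w : W // w ≠ u ∧ w ≠ v} {w : W // w ≠ u ∧ w ≠ v} ℂ)
            - qMat ℂ (delVert2 H u v)).det) ^ k
        * (x • (1 : Matrix V V ℂ)
            - (((r : ℂ) * (((m : ℂ) - 2) + coronal (qMat ℂ (delVert2 H u v)) (x - 2)))
                  • (1 : Matrix V V ℂ)
                + qMat ℂ F
                + coronal (qMat ℂ (delVert2 H u v)) (x - 2) • adjMat ℂ E)).det :=
  signlessLap_charpoly_edgePocketGraph_spanning_general m k r hm F H u v huv hdegu hdegv a b hinj E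
    hE hreg x hx
end
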